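/- arXiv:0903.1945 — 4 statements merged into one kernel-verified Lean document; each statement's English description precedes it below -/
import Mathlib

section
/- For positive definite s×s real matrices R and T, the block matrix [[R∘T, Diag(R)],[Diag(R), R∘T⁻¹]] is positive semidefinite, where Diag(R) is the diagonal matrix with the diagonal entries of R. -/
/-!
Writing `Diag(R) = R ⊙ 1`, the block matrix is the Hadamard product of `[[R, R], [R, R]]` and
`[[T, 1], [1, T⁻¹]]`. The first is `R.submatrix e e` for `e = Sum.elim id id`, hence positive
semidefinite; the second has Schur complement `T⁻¹ - 1 * T⁻¹ * 1 = 0`. The Schur product theorem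
finishes the proof.
-/

open Matrix
open scoped Matrix

namespace Matrix

variable {m n α : Type*}

theorem fromBlocks_hadamard [Mul α] {l o : Type*} (A A' : Matrix n l α) (B B' : Matrix n m α)
    (C C' : Matrix o l α) (D D' : Matrix o m α) :
    fromBlocks A B C D ⊙ fromBlocks A' B' C' D' =
      fromBlocks (A ⊙ A') (B ⊙ B') (C ⊙ C') (D ⊙ D') := by
  ext (i | i) (j | j) <;> rfl

theorem fromBlocks_self_eq_submatrix (A : Matrix n n α) :
    fromBlocks A A A A = A.submatrix (Sum.elim id id) (Sum.elim id id) := by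
  ext (i | i) (j | j) <;> rfl

theorem PosSemidef.fromBlocks_self [Ring α] [PartialOrder α] [StarRing α] {A : Matrix n n α}
    (hA : A.PosSemidef) : (fromBlocks A A A A).PosSemidef := by
  rw [fromBlocks_self_eq_submatrix]
  exact hA.submatrix _

theorem PosDef.fromBlocks_one_inv [Field α] [PartialOrder α] [StarRing α] [StarOrderedRing α]
    [Fintype n] [DecidableEq n] {A : Matrix n n α} (hA : A.PosDef) :
    (fromBlocks A 1 1 A⁻¹).PosSemidef := by
  have := hA.isUnit.invertible
  have schur_complement_eq_zero : A⁻¹ - (1 : Matrix n n α)ᴴ * A⁻¹ * 1 = 0 := by simp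
  simpa using (PosDef.fromBlocks₁₁ 1 A⁻¹ hA).mpr (schur_complement_eq_zero ▸ PosSemidef.zero)

end Matrix

/-- For positive definite `s×s` real matrices `R` and `T`, the block matrix
`[[R∘T, Diag(R)], [Diag(R), R∘T⁻¹]]` is positive semidefinite, where `Diag(R)` is the
diagonal matrix with the diagonal entries of `R`. -/
theorem block_hadamard_posSemidef {s : ℕ} (R T : Matrix (Fin s) (Fin s) ℝ)
    (hR : R.PosDef) (hT : T.PosDef) :
    (Matrix.fromBlocks (R ⊙ T) (Matrix.diagonal R.diag)
      (Matrix.diagonal R.diag) (R ⊙ T⁻¹)).PosSemidef := by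
  rw [← hadamard_one, ← fromBlocks_hadamard]
  exact hR.posSemidef.fromBlocks_self.hadamard hT.fromBlocks_one_inv
end

section
/- For a positive definite s×s real matrix R, one has diag(R)ᵀ (R∘R)⁻¹ diag(R) ≤ s, where diag(R) ∈ ℝˢ is the vector of diagonal entries of R. -/
open Matrix Finset
open scoped Matrix

/-!
Write `R = Bᵀ B` and, for `x : ℝˢ`, let `M = B diag(x) Bᵀ`, a symmetric matrix. Then
`diag(R) ⬝ x = tr M` and `xᵀ (R ∘ R) x = tr (M Mᵀ)`, so Cauchy–Schwarz on the diagonal of `M`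
gives `(diag(R) ⬝ x)² ≤ s · xᵀ (R ∘ R) x`. At `x = (R ∘ R)⁻¹ diag(R)` both sides are expressed
through `t = diag(R)ᵀ (R ∘ R)⁻¹ diag(R)`, and `t² ≤ s t` forces `t ≤ s`.
-/

namespace Matrix

variable {n : Type*} [Fintype n]

theorem sq_trace_le_card_mul_trace_mul_transpose (M : Matrix n n ℝ) :
    trace M ^ 2 ≤ Fintype.card n * trace (M * Mᵀ) := by
  calc trace M ^ 2 ≤ Fintype.card n * ∑ i, M i i ^ 2 := sq_sum_le_card_mul_sum_sq
    _ ≤ Fintype.card n * ∑ i, ∑ j, M i j ^ 2 := by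
        gcongr with i
        exact single_le_sum (f := fun j => M i j ^ 2) (fun j _ => sq_nonneg _) (mem_univ i)
    _ = Fintype.card n * trace (M * Mᵀ) := by simp [trace, mul_apply, sq]

theorem sq_diag_dotProduct_le_card_mul_hadamard_self [DecidableEq n] {R : Matrix n n ℝ}
    (hR : R.PosSemidef) (x : n → ℝ) :
    (R.diag ⬝ᵥ x) ^ 2 ≤ Fintype.card n * (x ⬝ᵥ (R ⊙ R) *ᵥ x) := by
  open scoped MatrixOrder in
  obtain ⟨B, hB⟩ := CStarAlgebra.nonneg_iff_eq_star_mul_self.mp hR.nonneg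
  rw [star_eq_conjTranspose, conjTranspose_eq_transpose_of_trivial] at hB
  set M := B * diagonal x * Bᵀ
  have hM : Mᵀ = M := by simp [M, Matrix.mul_assoc]
  have hdiag : R.diag ⬝ᵥ x = trace M := by
    rw [trace_mul_cycle, ← hB]
    simp [trace, dotProduct]
  have hquad : x ⬝ᵥ (R ⊙ R) *ᵥ x = trace (M * Mᵀ) := by
    rw [dotProduct_mulVec, dotProduct_vecMul_hadamard, hM, hB]
    simp only [M, transpose_mul, transpose_transpose, diagonal_transpose, Matrix.mul_assoc]
    rw [trace_mul_comm B]
    simp only [Matrix.mul_assoc]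
  rw [hdiag, hquad]
  exact sq_trace_le_card_mul_trace_mul_transpose M

theorem dotProduct_nonsing_inv_mulVec_le {𝕜 : Type*} [Field 𝕜] [LinearOrder 𝕜]
    [IsStrictOrderedRing 𝕜] [DecidableEq n] {A : Matrix n n 𝕜} {d : n → 𝕜} {c : 𝕜} (hc : 0 ≤ c)
    (h : ∀ x, (d ⬝ᵥ x) ^ 2 ≤ c * (x ⬝ᵥ A *ᵥ x)) : d ⬝ᵥ A⁻¹ *ᵥ d ≤ c := by
  by_cases hA : IsUnit A.det
  · have hquad : (A⁻¹ *ᵥ d) ⬝ᵥ A *ᵥ (A⁻¹ *ᵥ d) = d ⬝ᵥ A⁻¹ *ᵥ d := by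
      rw [mulVec_mulVec, mul_nonsing_inv _ hA, one_mulVec, dotProduct_comm]
    have hsq := h (A⁻¹ *ᵥ d)
    rw [hquad] at hsq
    nlinarith
  · simpa [nonsing_inv_apply_not_isUnit _ hA] using hc

end Matrix

/-- For a positive definite `s×s` real matrix `R`, one has
`diag(R)ᵀ (R∘R)⁻¹ diag(R) ≤ s`, where `diag(R)` is the vector of diagonal entries. -/
theorem diag_quadform_le {s : ℕ} (R : Matrix (Fin s) (Fin s) ℝ) (hR : R.PosDef) :
    R.diag ⬝ᵥ ((R ⊙ R)⁻¹).mulVec R.diag ≤ (s : ℝ) := by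
  have hle := dotProduct_nonsing_inv_mulVec_le (Nat.cast_nonneg _)
    (sq_diag_dotProduct_le_card_mul_hadamard_self hR.posSemidef)
  simpa using hle
end

section
/- For a positive semidefinite s×s real matrix R, the entrywise square satisfies R ∘ R ⪰ (1/s) · diag(R) diag(R)ᵀ in the Loewner order. -/
open Matrix
open scoped Matrix InnerProductSpace TensorProduct ComplexOrder

/-!
Write `R` as the Gram matrix of vectors `vᵢ ∈ ℝˢ`. Then `R ∘ R` is the Gram matrix of the
`vᵢ ⊗ vᵢ ∈ ℝˢ ⊗ ℝˢ`, and `Rᵢᵢ = ⟪e, vᵢ ⊗ vᵢ⟫` for `e = ∑ₖ eₖ ⊗ eₖ`, which has `‖e‖² = s`.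
The claim is then Cauchy–Schwarz, `⟪e, x⟫² ≤ ‖e‖² ‖x‖²`, for `x = ∑ᵢ cᵢ (vᵢ ⊗ vᵢ)`.
-/

namespace Matrix

variable {n 𝕜 E F : Type*} [RCLike 𝕜]

theorem gram_tmul [NormedAddCommGroup E] [InnerProductSpace 𝕜 E] [NormedAddCommGroup F]
    [InnerProductSpace 𝕜 F] (v : n → E) (w : n → F) :
    gram 𝕜 (fun i ↦ v i ⊗ₜ[𝕜] w i) = gram 𝕜 v ⊙ gram 𝕜 w := by
  ext i j
  simp

variable (𝕜) in
theorem posSemidef_gram_sub_smul_vecMulVec_inner [Finite n] [NormedAddCommGroup E]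
    [InnerProductSpace 𝕜 E] (v : n → E) (e : E) :
    (gram 𝕜 v - (‖e‖ ^ 2)⁻¹ • vecMulVec (fun i ↦ ⟪v i, e⟫_𝕜) (fun i ↦ ⟪e, v i⟫_𝕜)).PosSemidef := by
  rcases eq_or_ne e 0 with rfl | he
  · simpa using posSemidef_gram 𝕜 v
  have hgram : gram 𝕜 (innerSL 𝕜 e ∘ v) =
      vecMulVec (fun i ↦ ⟪v i, e⟫_𝕜) (fun i ↦ ⟪e, v i⟫_𝕜) := by
    ext i j
    simp [vecMulVec_apply, inner_conj_symm, mul_comm]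
  have key := posSemidef_opNorm_smul_gram_sub_gram v (innerSL 𝕜 e)
  rw [innerSL_apply_norm, hgram] at key
  have hpos : (0 : ℝ) < ‖e‖ ^ 2 := by positivity
  convert key.smul (inv_nonneg.mpr hpos.le) using 1
  rw [smul_sub, smul_smul, inv_mul_cancel₀ hpos.ne', one_smul]

open MatrixOrder in
theorem PosSemidef.exists_eq_gram [Fintype n] {A : Matrix n n 𝕜} (hA : A.PosSemidef) :
    ∃ v : n → EuclideanSpace 𝕜 n, A = gram 𝕜 v := by
  classical
  obtain ⟨B, rfl⟩ := CStarAlgebra.nonneg_iff_eq_star_mul_self.mp hA.nonneg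
  refine ⟨fun j ↦ WithLp.toLp 2 (fun i ↦ B i j), ?_⟩
  rw [gram_eq_conjTranspose_mul (EuclideanSpace.basisFun n 𝕜)]
  rfl

end Matrix

namespace OrthonormalBasis

variable {ι E : Type*} [Fintype ι] [NormedAddCommGroup E] [InnerProductSpace ℝ E]

theorem inner_sum_tmul_self_tmul (b : OrthonormalBasis ι ℝ E) (x y : E) :
    ⟪∑ i, b i ⊗ₜ[ℝ] b i, x ⊗ₜ[ℝ] y⟫_ℝ = ⟪x, y⟫_ℝ := by
  simp only [sum_inner, TensorProduct.inner_tmul]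
  rw [← b.sum_inner_mul_inner x y]
  exact Finset.sum_congr rfl fun i _ ↦ by rw [real_inner_comm x]

theorem norm_sum_tmul_self_sq (b : OrthonormalBasis ι ℝ E) :
    ‖∑ i, b i ⊗ₜ[ℝ] b i‖ ^ 2 = Fintype.card ι := by
  rw [← real_inner_self_eq_norm_sq, inner_sum]
  simp [b.inner_sum_tmul_self_tmul]

end OrthonormalBasis

/-- For a positive semidefinite `s×s` real matrix `R`, the entrywise square satisfies
`R ∘ R ⪰ (1/s) · diag(R) diag(R)ᵀ` in the Loewner order. -/
theorem hadamard_sq_ge_diag_rank_one {s : ℕ} (R : Matrix (Fin s) (Fin s) ℝ)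
    (hR : R.PosSemidef) :
    (R ⊙ R - ((s : ℝ))⁻¹ • Matrix.vecMulVec R.diag R.diag).PosSemidef := by
  obtain ⟨v, rfl⟩ := hR.exists_eq_gram
  let b := EuclideanSpace.basisFun (Fin s) ℝ
  have key := posSemidef_gram_sub_smul_vecMulVec_inner ℝ (fun i ↦ v i ⊗ₜ[ℝ] v i)
    (∑ k, b k ⊗ₜ[ℝ] b k)
  rw [gram_tmul, b.norm_sum_tmul_self_sq, Fintype.card_fin] at key
  simp only [real_inner_comm (∑ k, _), b.inner_sum_tmul_self_tmul] at key
  exact key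
end

section
/- Let y = Hs + z where z ∼ N(0, Σ_z) in ℝⁿ with Σ_z ≻ 0, independent of s, and s has finite support in ℝᵐ. Then the mutual information I(s; y) is a differentiable function along the scaling snr ↦ √snr·H, and the channel where the two equally likely inputs s⁽¹⁾=(2,0)ᵀ, s⁽²⁾=(0,2)ᵀ are transmitted through H = [[1,β],[β,1]] with diagonal precoder Diag(√λ₁, √λ₂) and Σ_z = I₂ yields squared received-point distances d²(ρ,0,β) = d²(0,ρ,β) = 4ρ(1+β²) and d²(ρ/2,ρ/2,β) = 4ρ(1−β)². In particular, for 0 < β ≤ 1, d²(ρ,0,β) > 4ρ > d²(ρ/2,ρ/2,β). -/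
open MeasureTheory Matrix Real

/-- The density of a centered multivariate Gaussian `N(0, S)` on `ℝⁿ`. -/
noncomputable def gaussPdf {n : ℕ} (S : Matrix (Fin n) (Fin n) ℝ) (y : Fin n → ℝ) : ℝ :=
  ((2 * Real.pi) ^ (n : ℝ) * S.det) ^ (-(1 : ℝ) / 2) *
    Real.exp (-(y ⬝ᵥ S⁻¹.mulVec y) / 2)

/-- The density of `y = G s + z` when `s` has finite support `pts` with weights `w`
and `z ∼ N(0, S)`. -/
noncomputable def mixDensity {n m K : ℕ} (S : Matrix (Fin n) (Fin n) ℝ)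
    (w : Fin K → ℝ) (pts : Fin K → (Fin m → ℝ)) (G : Matrix (Fin n) (Fin m) ℝ)
    (y : Fin n → ℝ) : ℝ :=
  ∑ k, w k * gaussPdf S (y - G.mulVec (pts k))

/-- The mutual information `I(s; y) = h(y) − h(z)` for the channel `y = G s + z`. -/
noncomputable def mutInfo {n m K : ℕ} (S : Matrix (Fin n) (Fin n) ℝ)
    (w : Fin K → ℝ) (pts : Fin K → (Fin m → ℝ)) (G : Matrix (Fin n) (Fin m) ℝ) : ℝ :=
  (-∫ y, mixDensity S w pts G y * Real.log (mixDensity S w pts G y)) -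
    (-∫ y, gaussPdf S y * Real.log (gaussPdf S y))

/-- Squared distance `‖r⁽¹⁾ − r⁽²⁾‖²` between the two noiseless received points of the
counterexample channel `H = [[1,β],[β,1]]` with precoder `Diag(√λ₁, √λ₂)` and inputs
`s⁽¹⁾ = (2,0)ᵀ`, `s⁽²⁾ = (0,2)ᵀ`. -/
noncomputable def d2 (β lam1 lam2 : ℝ) : ℝ :=
  let Hce : Matrix (Fin 2) (Fin 2) ℝ := !![1, β; β, 1]
  let P : Matrix (Fin 2) (Fin 2) ℝ := Matrix.diagonal ![Real.sqrt lam1, Real.sqrt lam2]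
  let r1 := (Hce * P).mulVec ![2, 0]
  let r2 := (Hce * P).mulVec ![0, 2]
  ∑ i, (r1 i - r2 i) ^ 2

/-!
Write `u = √snr`, so that the channel matrix is `u • H` and the output density is the Gaussian
mixture `f u y = ∑ₖ wₖ φ(y - u • H sₖ)`. For `u` in a bounded interval, `f u` lies between two
Gaussians in `y`, so `|log (f u y)|` grows at most quadratically in `‖y‖`, while `∂ᵤ f u y` is a
Gaussian times a linear factor. Hence `f log f` and its `u`-derivative are dominated by the
integrable function `(1 + ‖y‖³) e^{-c‖y‖²/4}`, where `c‖v‖² ≤ vᵀ S⁻¹ v`, and differentiation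
under the integral sign makes the output entropy differentiable in `u`; composing with `√·` at
`snr > 0` gives the claim. The distances are a direct computation.
-/

theorem Finset.sum_mul_le_of_le {ι : Type*} [Fintype ι] {w x : ι → ℝ} {B : ℝ}
    (hw : ∀ i, 0 ≤ w i) (hw1 : ∑ i, w i = 1) (h : ∀ i, x i ≤ B) : ∑ i, w i * x i ≤ B :=
  calc ∑ i, w i * x i ≤ ∑ i, w i * B := by gcongr with i; exacts [hw i, h i]
    _ = B := by rw [← Finset.sum_mul, hw1, one_mul]

theorem Finset.exists_pos_of_sum_eq_one {ι : Type*} [Fintype ι] {w : ι → ℝ}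
    (hw : ∀ i, 0 ≤ w i) (hw1 : ∑ i, w i = 1) : ∃ i, 0 < w i := by
  obtain ⟨i, -, hi⟩ := Finset.exists_ne_zero_of_sum_ne_zero (hw1.trans_ne one_ne_zero)
  exact ⟨i, (hw i).lt_of_ne' hi⟩

theorem one_add_mul_one_add_sq_le {x : ℝ} (hx : 0 ≤ x) :
    (1 + x) * (1 + x ^ 2) ≤ 2 * (1 + x ^ 3) := by
  nlinarith [mul_nonneg hx (sq_nonneg (x - 1))]

section QuadraticForm

variable {n : ℕ}

theorem Matrix.exists_abs_dotProduct_mulVec_le (M : Matrix (Fin n) (Fin n) ℝ) :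
    ∃ C, 0 ≤ C ∧ ∀ x z : Fin n → ℝ, |x ⬝ᵥ M *ᵥ z| ≤ C * ‖x‖ * ‖z‖ := by
  let B : (Fin n → ℝ) →L[ℝ] (Fin n → ℝ) →L[ℝ] ℝ := LinearMap.toContinuousLinearMap
    (LinearMap.toContinuousLinearMap.toLinearMap ∘ₗ Matrix.toLinearMap₂' ℝ M)
  exact ⟨‖B‖, norm_nonneg B, fun x z => by
    simpa [B, Matrix.toLinearMap₂'_apply'] using B.le_opNorm₂ x z⟩

theorem Matrix.PosDef.exists_pos_mul_norm_sq_le {M : Matrix (Fin n) (Fin n) ℝ} (hM : M.PosDef) :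
    ∃ c, 0 < c ∧ ∀ v : Fin n → ℝ, c * ‖v‖ ^ 2 ≤ v ⬝ᵥ M *ᵥ v := by
  obtain ⟨c, hc, hmin⟩ := (isCompact_sphere (0 : Fin n → ℝ) 1).exists_forall_le'
    (f := fun v => v ⬝ᵥ M *ᵥ v) (by fun_prop) (a := 0)
    fun v hv => by simpa using hM.dotProduct_mulVec_pos (ne_zero_of_mem_unit_sphere ⟨v, hv⟩)
  refine ⟨c, hc, fun v => ?_⟩
  rcases eq_or_ne v 0 with rfl | hv
  · simp
  · have hv' : 0 < ‖v‖ := norm_pos_iff.2 hv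
    have := hmin (‖v‖⁻¹ • v) (by simp [norm_smul, hv'.ne'])
    simp only [mulVec_smul, dotProduct_smul, smul_dotProduct, smul_eq_mul] at this
    field_simp at this
    linarith

theorem Matrix.IsHermitian.dotProduct_mulVec_comm {M : Matrix (Fin n) (Fin n) ℝ}
    (hM : M.IsHermitian) (x z : Fin n → ℝ) : x ⬝ᵥ M *ᵥ z = z ⬝ᵥ M *ᵥ x := by
  rw [dotProduct_mulVec, ← mulVec_transpose, ← conjTranspose_eq_transpose_of_trivial, hM.eq,
    dotProduct_comm]

theorem Matrix.IsHermitian.hasDerivAt_dotProduct_mulVec_sub_smul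
    {M : Matrix (Fin n) (Fin n) ℝ} (hM : M.IsHermitian) (y a : Fin n → ℝ) (u : ℝ) :
    HasDerivAt (fun u : ℝ => (y - u • a) ⬝ᵥ M *ᵥ (y - u • a))
      (-2 * (a ⬝ᵥ M *ᵥ (y - u • a))) u := by
  have expand : ∀ u : ℝ, (y - u • a) ⬝ᵥ M *ᵥ (y - u • a) =
      y ⬝ᵥ M *ᵥ y - 2 * (a ⬝ᵥ M *ᵥ y) * u + (a ⬝ᵥ M *ᵥ a) * u ^ 2 := fun u => by
    simp only [mulVec_sub, mulVec_smul, dotProduct_sub, sub_dotProduct, dotProduct_smul,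
      smul_dotProduct, smul_eq_mul, hM.dotProduct_mulVec_comm y a]
    ring
  refine ((((hasDerivAt_id u).const_mul _).const_sub _).add
    ((hasDerivAt_pow 2 u).const_mul _)).congr_of_eventuallyEq (.of_forall expand) |>.congr_deriv ?_
  simp only [mulVec_sub, mulVec_smul, dotProduct_sub, dotProduct_smul, smul_eq_mul]
  ring

end QuadraticForm

theorem integrable_norm_pow_mul_exp_neg_mul_sq {E : Type*} [NormedAddCommGroup E]
    [NormedSpace ℝ E] [FiniteDimensional ℝ E] [MeasurableSpace E] [BorelSpace E]
    (μ : Measure E) [μ.IsAddHaarMeasure] {b : ℝ} (hb : 0 < b) (k : ℕ) :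
    Integrable (fun x : E => ‖x‖ ^ k * exp (-b * ‖x‖ ^ 2)) μ := by
  rcases subsingleton_or_nontrivial E with hE | hE
  · exact (integrable_const ((0 : ℝ) ^ k * exp (-b * 0 ^ 2))).congr
      (.of_forall fun x => by simp [Subsingleton.elim x 0])
  · rw [integrable_fun_norm_addHaar μ (f := fun r => r ^ k * exp (-b * r ^ 2))]
    refine (integrableOn_rpow_mul_exp_neg_mul_sq hb (s := (Module.finrank ℝ E - 1 + k : ℕ))
      (neg_one_lt_zero.trans_le (Nat.cast_nonneg _))).congr_fun (fun r _ => ?_) measurableSet_Ioi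
    simp only [Real.rpow_natCast, pow_add, smul_eq_mul]
    ring

theorem integrable_one_add_norm_pow_mul_exp_neg_mul_sq {E : Type*} [NormedAddCommGroup E]
    [NormedSpace ℝ E] [FiniteDimensional ℝ E] [MeasurableSpace E] [BorelSpace E]
    (μ : Measure E) [μ.IsAddHaarMeasure] {b : ℝ} (hb : 0 < b) (k : ℕ) :
    Integrable (fun x : E => (1 + ‖x‖ ^ k) * exp (-b * ‖x‖ ^ 2)) μ := by
  simpa [add_mul] using (integrable_norm_pow_mul_exp_neg_mul_sq μ hb 0).fun_add
    (integrable_norm_pow_mul_exp_neg_mul_sq μ hb k)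

section Gaussian

variable {n : ℕ} {S : Matrix (Fin n) (Fin n) ℝ}

theorem gaussPdf_eq_mul_exp (S : Matrix (Fin n) (Fin n) ℝ) (v : Fin n → ℝ) :
    gaussPdf S v = gaussPdf S 0 * exp (-(v ⬝ᵥ S⁻¹ *ᵥ v) / 2) := by
  simp [gaussPdf]

theorem gaussPdf_zero_pos (hS : S.PosDef) : 0 < gaussPdf S 0 := by
  have := hS.det_pos
  simp only [gaussPdf, mulVec_zero, dotProduct_zero, neg_zero, zero_div, exp_zero, mul_one]
  positivity

theorem gaussPdf_pos (hS : S.PosDef) (v : Fin n → ℝ) : 0 < gaussPdf S v := by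
  rw [gaussPdf_eq_mul_exp]
  exact mul_pos (gaussPdf_zero_pos hS) (exp_pos _)

theorem gaussPdf_le_gaussPdf_zero (hS : S.PosDef) (v : Fin n → ℝ) :
    gaussPdf S v ≤ gaussPdf S 0 := by
  have : 0 ≤ v ⬝ᵥ S⁻¹ *ᵥ v := by simpa using hS.inv.posSemidef.dotProduct_mulVec_nonneg v
  rw [gaussPdf_eq_mul_exp S v]
  exact mul_le_of_le_one_right (gaussPdf_zero_pos hS).le (exp_le_one_iff.2 (by linarith))

theorem gaussPdf_sub_le (hS : S.PosDef) {c R : ℝ} (hc₀ : 0 ≤ c)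
    (hc : ∀ v, c * ‖v‖ ^ 2 ≤ v ⬝ᵥ S⁻¹ *ᵥ v)
    {v : Fin n → ℝ} (hv : ‖v‖ ≤ R) (y : Fin n → ℝ) :
    gaussPdf S (y - v) ≤ gaussPdf S 0 * exp (c * R ^ 2 / 2) * exp (-(c / 4) * ‖y‖ ^ 2) := by
  have hy : ‖y‖ ≤ ‖y - v‖ + R := (norm_le_norm_sub_add y v).trans (by gcongr)
  have hy2 : ‖y‖ ^ 2 ≤ 2 * ‖y - v‖ ^ 2 + 2 * R ^ 2 :=
    (pow_le_pow_left₀ (norm_nonneg y) hy 2).trans (add_sq_le.trans_eq (by ring))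
  rw [gaussPdf_eq_mul_exp S (y - v), mul_assoc, ← exp_add]
  have := gaussPdf_zero_pos hS
  gcongr
  nlinarith [hc (y - v)]

theorem le_gaussPdf_sub (hS : S.PosDef) {C R : ℝ} (hC₀ : 0 ≤ C)
    (hC : ∀ v, v ⬝ᵥ S⁻¹ *ᵥ v ≤ C * ‖v‖ ^ 2)
    {v : Fin n → ℝ} (hv : ‖v‖ ≤ R) (y : Fin n → ℝ) :
    gaussPdf S 0 * exp (-(C * (‖y‖ ^ 2 + R ^ 2))) ≤ gaussPdf S (y - v) := by
  have hyv : ‖y - v‖ ≤ ‖y‖ + R := (norm_sub_le y v).trans (by gcongr)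
  have hyv2 : ‖y - v‖ ^ 2 ≤ 2 * (‖y‖ ^ 2 + R ^ 2) :=
    (pow_le_pow_left₀ (norm_nonneg _) hyv 2).trans add_sq_le
  rw [gaussPdf_eq_mul_exp S (y - v)]
  have := gaussPdf_zero_pos hS
  gcongr
  nlinarith [hC (y - v)]

theorem hasDerivAt_gaussPdf_sub_smul (hS : S.PosDef) (y a : Fin n → ℝ) (u : ℝ) :
    HasDerivAt (fun u : ℝ => gaussPdf S (y - u • a))
      (gaussPdf S (y - u • a) * (a ⬝ᵥ S⁻¹ *ᵥ (y - u • a))) u := by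
  refine (((hS.inv.isHermitian.hasDerivAt_dotProduct_mulVec_sub_smul y a u).neg.div_const 2).exp
    |>.const_mul (gaussPdf S 0)).congr_of_eventuallyEq
    (.of_forall fun u => gaussPdf_eq_mul_exp S _) |>.congr_deriv ?_
  rw [gaussPdf_eq_mul_exp S (y - u • a), Pi.neg_apply]
  ring

theorem continuous_gaussPdf (S : Matrix (Fin n) (Fin n) ℝ) : Continuous (gaussPdf S) := by
  unfold gaussPdf
  fun_prop

end Gaussian

section Mixture

variable {n m K : ℕ} {S : Matrix (Fin n) (Fin n) ℝ} {w : Fin K → ℝ} {pts : Fin K → Fin m → ℝ}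

theorem mixDensity_pos (hS : S.PosDef) (hw : ∀ k, 0 ≤ w k) (hw1 : ∑ k, w k = 1)
    (G : Matrix (Fin n) (Fin m) ℝ) (y : Fin n → ℝ) : 0 < mixDensity S w pts G y := by
  obtain ⟨k, hk⟩ := Finset.exists_pos_of_sum_eq_one hw hw1
  exact Finset.sum_pos' (fun k _ => mul_nonneg (hw k) (gaussPdf_pos hS _).le)
    ⟨k, Finset.mem_univ k, mul_pos hk (gaussPdf_pos hS _)⟩

theorem mixDensity_le_gaussPdf_zero (hS : S.PosDef) (hw : ∀ k, 0 ≤ w k) (hw1 : ∑ k, w k = 1)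
    (G : Matrix (Fin n) (Fin m) ℝ) (y : Fin n → ℝ) : mixDensity S w pts G y ≤ gaussPdf S 0 :=
  Finset.sum_mul_le_of_le hw hw1 fun _ => gaussPdf_le_gaussPdf_zero hS _

theorem mixDensity_le_mul_exp (hS : S.PosDef) (hw : ∀ k, 0 ≤ w k) (hw1 : ∑ k, w k = 1)
    {c R : ℝ} (hc₀ : 0 ≤ c) (hc : ∀ v, c * ‖v‖ ^ 2 ≤ v ⬝ᵥ S⁻¹ *ᵥ v)
    {G : Matrix (Fin n) (Fin m) ℝ} (hG : ∀ k, ‖G *ᵥ pts k‖ ≤ R) (y : Fin n → ℝ) :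
    mixDensity S w pts G y ≤ gaussPdf S 0 * exp (c * R ^ 2 / 2) * exp (-(c / 4) * ‖y‖ ^ 2) :=
  Finset.sum_mul_le_of_le hw hw1 fun k => gaussPdf_sub_le hS hc₀ hc (hG k) y

theorem exists_abs_log_mixDensity_le (hS : S.PosDef) (hw : ∀ k, 0 ≤ w k) (hw1 : ∑ k, w k = 1)
    {C : ℝ} (hC₀ : 0 ≤ C) (hC : ∀ v, v ⬝ᵥ S⁻¹ *ᵥ v ≤ C * ‖v‖ ^ 2) (R : ℝ) :
    ∃ A, 0 ≤ A ∧ ∀ G : Matrix (Fin n) (Fin m) ℝ, (∀ k, ‖G *ᵥ pts k‖ ≤ R) →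
      ∀ y, |log (mixDensity S w pts G y)| ≤ A * (1 + ‖y‖ ^ 2) := by
  obtain ⟨k, hk⟩ := Finset.exists_pos_of_sum_eq_one hw hw1
  have hk₀ := mul_pos hk (gaussPdf_zero_pos hS)
  refine ⟨|log (gaussPdf S 0)| + |log (w k * gaussPdf S 0)| + C * R ^ 2 + C, by positivity,
    fun G hG y => ?_⟩
  have hlower : w k * gaussPdf S 0 * exp (-(C * (‖y‖ ^ 2 + R ^ 2))) ≤ mixDensity S w pts G y :=
    calc w k * gaussPdf S 0 * exp (-(C * (‖y‖ ^ 2 + R ^ 2)))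
        ≤ w k * gaussPdf S (y - G *ᵥ pts k) := by
          rw [mul_assoc]; gcongr; exact le_gaussPdf_sub hS hC₀ hC (hG k) y
      _ ≤ mixDensity S w pts G y :=
          Finset.single_le_sum (f := fun k => w k * gaussPdf S (y - G *ᵥ pts k))
            (fun k _ => mul_nonneg (hw k) (gaussPdf_pos hS _).le) (Finset.mem_univ k)
  have hlow : log (w k * gaussPdf S 0) - C * (‖y‖ ^ 2 + R ^ 2) ≤ log (mixDensity S w pts G y) :=
    calc log (w k * gaussPdf S 0) - C * (‖y‖ ^ 2 + R ^ 2)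
        = log (w k * gaussPdf S 0 * exp (-(C * (‖y‖ ^ 2 + R ^ 2)))) := by
          rw [log_mul hk₀.ne' (exp_pos _).ne', log_exp, sub_eq_add_neg]
      _ ≤ log (mixDensity S w pts G y) := log_le_log (by positivity) hlower
  have hup : log (mixDensity S w pts G y) ≤ log (gaussPdf S 0) :=
    log_le_log (mixDensity_pos hS hw hw1 G y) (mixDensity_le_gaussPdf_zero hS hw hw1 G y)
  have := abs_nonneg (log (gaussPdf S 0))
  have := abs_nonneg (log (w k * gaussPdf S 0))
  have := mul_nonneg hC₀ (sq_nonneg R)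
  refine (abs_le_max_abs_abs hlow hup).trans (max_le ?_ (by nlinarith [sq_nonneg ‖y‖]))
  calc |log (w k * gaussPdf S 0) - C * (‖y‖ ^ 2 + R ^ 2)|
      ≤ |log (w k * gaussPdf S 0)| + C * (‖y‖ ^ 2 + R ^ 2) :=
        (abs_sub _ _).trans_eq (by rw [abs_of_nonneg (by positivity : 0 ≤ C * (‖y‖ ^ 2 + R ^ 2))])
    _ ≤ _ := by nlinarith [sq_nonneg ‖y‖]

theorem continuous_mixDensity (G : Matrix (Fin n) (Fin m) ℝ) :
    Continuous (mixDensity S w pts G) := by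
  unfold mixDensity
  have := continuous_gaussPdf S
  fun_prop

theorem integrable_negMulLog_mixDensity (hS : S.PosDef) (hw : ∀ k, 0 ≤ w k)
    (hw1 : ∑ k, w k = 1) (G : Matrix (Fin n) (Fin m) ℝ) :
    Integrable fun y => negMulLog (mixDensity S w pts G y) := by
  obtain ⟨c, hc₀, hc⟩ := hS.inv.exists_pos_mul_norm_sq_le
  obtain ⟨C, hC₀, hC⟩ := S⁻¹.exists_abs_dotProduct_mulVec_le
  set ρ := ∑ k, ‖G *ᵥ pts k‖
  have hρ : ∀ k, ‖G *ᵥ pts k‖ ≤ ρ := fun k =>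
    Finset.single_le_sum (f := fun k => ‖G *ᵥ pts k‖) (fun _ _ => norm_nonneg _) (Finset.mem_univ k)
  obtain ⟨A, hA₀, hA⟩ := exists_abs_log_mixDensity_le (pts := pts) hS hw hw1 hC₀
    (fun v => (le_abs_self _).trans ((hC v v).trans_eq (by ring))) ρ
  refine ((integrable_one_add_norm_pow_mul_exp_neg_mul_sq volume (by positivity : 0 < c / 4) 2)
    |>.const_mul (gaussPdf S 0 * exp (c * ρ ^ 2 / 2) * A)).mono'
    ((continuous_negMulLog.comp (continuous_mixDensity G)).aestronglyMeasurable)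
    (.of_forall fun y => ?_)
  have hf := mixDensity_pos (pts := pts) hS hw hw1 G y
  rw [Real.norm_eq_abs, negMulLog, neg_mul, abs_neg, abs_mul, abs_of_pos hf]
  calc mixDensity S w pts G y * |log (mixDensity S w pts G y)|
      ≤ gaussPdf S 0 * exp (c * ρ ^ 2 / 2) * exp (-(c / 4) * ‖y‖ ^ 2) * (A * (1 + ‖y‖ ^ 2)) :=
        mul_le_mul (mixDensity_le_mul_exp hS hw hw1 hc₀.le hc hρ y) (hA G hρ y) (abs_nonneg _)
          (by have := gaussPdf_zero_pos hS; positivity)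
    _ = _ := by ring

noncomputable def mixDensitySmulDeriv (S : Matrix (Fin n) (Fin n) ℝ) (w : Fin K → ℝ)
    (pts : Fin K → Fin m → ℝ) (H : Matrix (Fin n) (Fin m) ℝ) (u : ℝ) (y : Fin n → ℝ) : ℝ :=
  ∑ k, w k * (gaussPdf S (y - u • H *ᵥ pts k) * (H *ᵥ pts k ⬝ᵥ S⁻¹ *ᵥ (y - u • H *ᵥ pts k)))

theorem norm_smul_mulVec_le {H : Matrix (Fin n) (Fin m) ℝ} {ρ : ℝ}
    (hρ : ∀ k, ‖H *ᵥ pts k‖ ≤ ρ) {u U : ℝ} (hu : |u| ≤ U) (k : Fin K) :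
    ‖(u • H) *ᵥ pts k‖ ≤ U * ρ := by
  rw [smul_mulVec, norm_smul, Real.norm_eq_abs]
  exact mul_le_mul hu (hρ k) (norm_nonneg _) ((abs_nonneg u).trans hu)

theorem hasDerivAt_mixDensity_smul (hS : S.PosDef) (H : Matrix (Fin n) (Fin m) ℝ)
    (y : Fin n → ℝ) (u : ℝ) :
    HasDerivAt (fun u : ℝ => mixDensity S w pts (u • H) y)
      (mixDensitySmulDeriv S w pts H u y) u := by
  simp only [mixDensity, smul_mulVec]
  exact HasDerivAt.fun_sum fun k _ => (hasDerivAt_gaussPdf_sub_smul hS y _ u).const_mul (w k)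

theorem continuous_mixDensitySmulDeriv (H : Matrix (Fin n) (Fin m) ℝ) (u : ℝ) :
    Continuous (mixDensitySmulDeriv S w pts H u) := by
  unfold mixDensitySmulDeriv
  have := continuous_gaussPdf S
  fun_prop

theorem abs_mixDensitySmulDeriv_le (hS : S.PosDef) (hw : ∀ k, 0 ≤ w k) (hw1 : ∑ k, w k = 1)
    {c C : ℝ} (hc₀ : 0 ≤ c) (hc : ∀ v, c * ‖v‖ ^ 2 ≤ v ⬝ᵥ S⁻¹ *ᵥ v) (hC₀ : 0 ≤ C)
    (hC : ∀ x z : Fin n → ℝ, |x ⬝ᵥ S⁻¹ *ᵥ z| ≤ C * ‖x‖ * ‖z‖)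
    {H : Matrix (Fin n) (Fin m) ℝ} {ρ : ℝ} (hρ : ∀ k, ‖H *ᵥ pts k‖ ≤ ρ) {u U : ℝ} (hu : |u| ≤ U)
    (y : Fin n → ℝ) :
    |mixDensitySmulDeriv S w pts H u y| ≤ gaussPdf S 0 * exp (c * (U * ρ) ^ 2 / 2)
      * exp (-(c / 4) * ‖y‖ ^ 2) * (C * ρ * (‖y‖ + U * ρ)) := by
  have hshift : ∀ k, ‖u • H *ᵥ pts k‖ ≤ U * ρ := fun k => by
    simpa only [smul_mulVec] using norm_smul_mulVec_le hρ hu k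
  have hscore : ∀ k, |H *ᵥ pts k ⬝ᵥ S⁻¹ *ᵥ (y - u • H *ᵥ pts k)| ≤ C * ρ * (‖y‖ + U * ρ) :=
    fun k => (hC _ _).trans <| by
      have := (norm_nonneg _).trans (hρ k)
      gcongr
      exacts [hρ k, (norm_sub_le _ _).trans (by gcongr; exact hshift k)]
  unfold mixDensitySmulDeriv
  calc |∑ k, w k * (gaussPdf S (y - u • H *ᵥ pts k) * (H *ᵥ pts k ⬝ᵥ S⁻¹ *ᵥ (y - u • H *ᵥ pts k)))|
      ≤ ∑ k, w k * (gaussPdf S (y - u • H *ᵥ pts k)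
          * |H *ᵥ pts k ⬝ᵥ S⁻¹ *ᵥ (y - u • H *ᵥ pts k)|) := by
        refine (Finset.abs_sum_le_sum_abs _ _).trans_eq (Finset.sum_congr rfl fun k _ => ?_)
        rw [abs_mul, abs_mul, abs_of_nonneg (hw k), abs_of_pos (gaussPdf_pos hS _)]
    _ ≤ _ := Finset.sum_mul_le_of_le hw hw1 fun k =>
        mul_le_mul (gaussPdf_sub_le hS hc₀ hc (hshift k) y) (hscore k) (abs_nonneg _)
          (by have := gaussPdf_zero_pos hS; positivity)

theorem exists_abs_deriv_negMulLog_mixDensity_smul_le (hS : S.PosDef) (hw : ∀ k, 0 ≤ w k)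
    (hw1 : ∑ k, w k = 1) {c C : ℝ} (hc₀ : 0 ≤ c) (hc : ∀ v, c * ‖v‖ ^ 2 ≤ v ⬝ᵥ S⁻¹ *ᵥ v)
    (hC₀ : 0 ≤ C) (hC : ∀ x z : Fin n → ℝ, |x ⬝ᵥ S⁻¹ *ᵥ z| ≤ C * ‖x‖ * ‖z‖)
    (H : Matrix (Fin n) (Fin m) ℝ) (U : ℝ) :
    ∃ D, ∀ u, |u| ≤ U → ∀ y, |(-log (mixDensity S w pts (u • H) y) - 1)
      * mixDensitySmulDeriv S w pts H u y| ≤ D * ((1 + ‖y‖ ^ 3) * exp (-(c / 4) * ‖y‖ ^ 2)) := by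
  set ρ := ∑ k, ‖H *ᵥ pts k‖
  have hρ : ∀ k, ‖H *ᵥ pts k‖ ≤ ρ := fun k =>
    Finset.single_le_sum (f := fun k => ‖H *ᵥ pts k‖) (fun _ _ => norm_nonneg _) (Finset.mem_univ k)
  have hρ₀ : 0 ≤ ρ := by positivity
  obtain ⟨A, hA₀, hA⟩ := exists_abs_log_mixDensity_le (pts := pts) hS hw hw1 hC₀
    (fun v => (le_abs_self _).trans ((hC v v).trans_eq (by ring))) (U * ρ)
  set K := gaussPdf S 0 * exp (c * (U * ρ) ^ 2 / 2)
  have hK : 0 < K := by have := gaussPdf_zero_pos hS; positivity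
  refine ⟨(1 + A) * K * (C * ρ) * (1 + U * ρ) * 2, fun u hu y => ?_⟩
  have hU : 0 ≤ U := (abs_nonneg u).trans hu
  have hlog : |-log (mixDensity S w pts (u • H) y) - 1| ≤ (1 + A) * (1 + ‖y‖ ^ 2) := by
    have := hA _ (fun k => norm_smul_mulVec_le hρ hu k) y
    have := abs_sub (-log (mixDensity S w pts (u • H) y)) 1
    rw [abs_neg, abs_one] at this
    nlinarith [sq_nonneg ‖y‖]
  have hy := norm_nonneg y
  rw [abs_mul]
  calc |-log (mixDensity S w pts (u • H) y) - 1| * |mixDensitySmulDeriv S w pts H u y|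
      ≤ (1 + A) * (1 + ‖y‖ ^ 2) * (K * exp (-(c / 4) * ‖y‖ ^ 2) * (C * ρ * (‖y‖ + U * ρ))) :=
        mul_le_mul hlog (abs_mixDensitySmulDeriv_le hS hw hw1 hc₀ hc hC₀ hC hρ hu y)
          (abs_nonneg _) (by positivity)
    _ ≤ (1 + A) * (1 + ‖y‖ ^ 2) * (K * exp (-(c / 4) * ‖y‖ ^ 2)
          * (C * ρ * ((1 + U * ρ) * (1 + ‖y‖)))) := by
        gcongr
        nlinarith [mul_nonneg (mul_nonneg hU hρ₀) hy]
    _ = (1 + A) * K * (C * ρ) * (1 + U * ρ) * ((1 + ‖y‖) * (1 + ‖y‖ ^ 2))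
          * exp (-(c / 4) * ‖y‖ ^ 2) := by ring
    _ ≤ (1 + A) * K * (C * ρ) * (1 + U * ρ) * (2 * (1 + ‖y‖ ^ 3))
          * exp (-(c / 4) * ‖y‖ ^ 2) := by
        gcongr _ * ?_ * _
        exact one_add_mul_one_add_sq_le hy
    _ = _ := by ring

theorem differentiable_integral_negMulLog_mixDensity_smul (hS : S.PosDef) (hw : ∀ k, 0 ≤ w k)
    (hw1 : ∑ k, w k = 1) (H : Matrix (Fin n) (Fin m) ℝ) :
    Differentiable ℝ fun u : ℝ => ∫ y, negMulLog (mixDensity S w pts (u • H) y) := by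
  obtain ⟨c, hc₀, hc⟩ := hS.inv.exists_pos_mul_norm_sq_le
  obtain ⟨C, hC₀, hC⟩ := S⁻¹.exists_abs_dotProduct_mulVec_le
  intro u₀
  obtain ⟨D, hD⟩ :=
    exists_abs_deriv_negMulLog_mixDensity_smul_le hS hw hw1 hc₀.le hc hC₀ hC H (|u₀| + 1)
  have hball : ∀ u ∈ Metric.ball u₀ 1, |u| ≤ |u₀| + 1 := fun u hu => by
    have := abs_sub_abs_le_abs_sub u u₀
    rw [Metric.mem_ball, Real.dist_eq] at hu
    linarith
  exact (hasDerivAt_integral_of_dominated_loc_of_deriv_le (Metric.ball_mem_nhds u₀ one_pos)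
    (.of_forall fun u => (continuous_negMulLog.comp (continuous_mixDensity _)).aestronglyMeasurable)
    (integrable_negMulLog_mixDensity hS hw hw1 _)
    (F' := fun u y => (-log (mixDensity S w pts (u • H) y) - 1) * mixDensitySmulDeriv S w pts H u y)
    (((measurable_log.comp (continuous_mixDensity _).measurable).neg.sub_const 1).mul
      (continuous_mixDensitySmulDeriv H u₀).measurable).aestronglyMeasurable
    (.of_forall fun y u hu => hD u (hball u hu) y)
    ((integrable_one_add_norm_pow_mul_exp_neg_mul_sq volume (by positivity) 3).const_mul D)
    (.of_forall fun y u _ => (hasDerivAt_negMulLog (mixDensity_pos hS hw hw1 _ y).ne').comp u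
      (hasDerivAt_mixDensity_smul hS H y u))).2.differentiableAt

theorem mutInfo_eq_sub (G : Matrix (Fin n) (Fin m) ℝ) :
    mutInfo S w pts G =
      (∫ y, negMulLog (mixDensity S w pts G y)) - ∫ y, negMulLog (gaussPdf S y) := by
  simp only [mutInfo, negMulLog, neg_mul, integral_neg]

theorem differentiableAt_mutInfo_sqrt_smul (hS : S.PosDef) (hw : ∀ k, 0 ≤ w k)
    (hw1 : ∑ k, w k = 1) (H : Matrix (Fin n) (Fin m) ℝ) {snr : ℝ} (hsnr : 0 < snr) :
    DifferentiableAt ℝ (fun t => mutInfo S w pts (√t • H)) snr := by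
  simp only [mutInfo_eq_sub]
  exact ((differentiable_integral_negMulLog_mixDensity_smul hS hw hw1 H).differentiableAt.comp
    snr (hasDerivAt_sqrt hsnr.ne').differentiableAt).sub_const _

end Mixture

theorem d2_eq (β l₁ l₂ : ℝ) :
    d2 β l₁ l₂ = 4 * ((√l₁ - β * √l₂) ^ 2 + (β * √l₁ - √l₂) ^ 2) := by
  simp only [d2, mulVec, dotProduct, diagonal, mul_apply, of_apply, cons_val', cons_val_fin_one,
    mul_ite, mul_zero, Finset.sum_ite_eq', Finset.mem_univ, ↓reduceIte, Fin.sum_univ_two,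
    Fin.isValue, cons_val_zero, cons_val_one, add_zero, zero_add, one_mul]
  ring

theorem d2_zero_right (β : ℝ) {l : ℝ} (hl : 0 ≤ l) : d2 β l 0 = 4 * l * (1 + β ^ 2) := by
  rw [d2_eq, sqrt_zero]
  linear_combination (4 + 4 * β ^ 2) * sq_sqrt hl

theorem d2_zero_left (β : ℝ) {l : ℝ} (hl : 0 ≤ l) : d2 β 0 l = 4 * l * (1 + β ^ 2) := by
  rw [d2_eq, sqrt_zero]
  linear_combination (4 + 4 * β ^ 2) * sq_sqrt hl

theorem d2_self (β : ℝ) {l : ℝ} (hl : 0 ≤ l) : d2 β l l = 8 * l * (1 - β) ^ 2 := by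
  rw [d2_eq]
  linear_combination 8 * (1 - β) ^ 2 * sq_sqrt hl

/-- Let `y = Hs + z` with `z ∼ N(0, Σz)`, `Σz ≻ 0`, independent of `s`, and `s` with
finite support.  Then `I(s; y)` is differentiable along `snr ↦ √snr·H`, and in the
two-dimensional counterexample the squared received-point distances satisfy
`d²(ρ,0,β) = d²(0,ρ,β) = 4ρ(1+β²)`, `d²(ρ/2,ρ/2,β) = 4ρ(1−β)²`; in particular for
`0 < β ≤ 1`, `d²(ρ,0,β) > 4ρ > d²(ρ/2,ρ/2,β)`. -/
theorem mi_differentiable_and_counterexample_distances {n m K : ℕ}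
    (S : Matrix (Fin n) (Fin n) ℝ) (hS : S.PosDef)
    (H : Matrix (Fin n) (Fin m) ℝ) (w : Fin K → ℝ) (pts : Fin K → (Fin m → ℝ))
    (hw : ∀ k, 0 ≤ w k) (hw1 : ∑ k, w k = 1) :
    (∀ snr : ℝ, 0 < snr →
      DifferentiableAt ℝ (fun t => mutInfo S w pts (Real.sqrt t • H)) snr) ∧
    (∀ β ρ : ℝ, 0 < ρ →
      d2 β ρ 0 = 4 * ρ * (1 + β ^ 2) ∧
      d2 β 0 ρ = 4 * ρ * (1 + β ^ 2) ∧
      d2 β (ρ / 2) (ρ / 2) = 4 * ρ * (1 - β) ^ 2 ∧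
      (0 < β → β ≤ 1 → 4 * ρ < d2 β ρ 0 ∧ d2 β (ρ / 2) (ρ / 2) < 4 * ρ)) := by
  refine ⟨fun snr hsnr => differentiableAt_mutInfo_sqrt_smul hS hw hw1 H hsnr,
    fun β ρ hρ => ?_⟩
  have hhalf : d2 β (ρ / 2) (ρ / 2) = 4 * ρ * (1 - β) ^ 2 := by
    rw [d2_self β (by positivity)]
    ring
  refine ⟨d2_zero_right β hρ.le, d2_zero_left β hρ.le, hhalf, fun hβ hβ1 => ⟨?_, ?_⟩⟩
  · rw [d2_zero_right β hρ.le]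
    nlinarith [mul_pos hρ (mul_pos hβ hβ)]
  · rw [hhalf]
    nlinarith [mul_pos (mul_pos hρ hβ) (show 0 < 2 - β by linarith)]
end
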